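/- Let T = P · Q be the concatenation of strings P and Q over an alphabet with wildcards. Then for any i ≤ |P| and j ≤ |Q|, the two-string longest common extension with wildcards satisfies LCEW_{P,Q}(i,j) = min(LCEW_T(i, j + |P|), |P| − i + 1, |Q| − j + 1). -/

import Mathlib

/-!
Both extension lengths are the largest `k` below a bound such that every offset `p < k` matches,
so it suffices to compare, for each `k`, the conditions `k ≤ lcew2 …` and `k ≤ min (lcew …) …`.
Once `k ≤ min (|P| - i) (|Q| - j)`, offset `p < k` reads position `i + p` of `P ++ Q` inside `P`
and position `j + |P| + p` inside `Q`, so the two match conditions coincide.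
-/

variable {α : Type*}

/-- Wildcard match relation on characters: `a ∼ b ↔ a = b ∨ a = d ∨ b = d`,
where `d` is the wildcard. -/
def mtch (d a b : α) : Prop := a = b ∨ a = d ∨ b = d

instance [DecidableEq α] (d a b : α) : Decidable (mtch d a b) :=
  inferInstanceAs (Decidable (a = b ∨ a = d ∨ b = d))

/-- Positionwise match of equal-length strings (lists). -/
def smatch (d : α) (X Y : List α) : Prop :=
  X.length = Y.length ∧ ∀ i < X.length, mtch d (X.getD i d) (Y.getD i d)

/-- Longest common extension with wildcards in a single string `T`,
0-based positions. -/
def lcew [DecidableEq α] (d : α) (T : List α) (i j : ℕ) : ℕ :=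
  Nat.findGreatest
    (fun ℓ => ℓ ≤ min (T.length - i) (T.length - j) ∧
      ∀ p < ℓ, mtch d (T.getD (i + p) d) (T.getD (j + p) d)) T.length

/-- Longest common extension with wildcards between two strings `P` and `Q`,
0-based positions. -/
def lcew2 [DecidableEq α] (d : α) (P Q : List α) (i j : ℕ) : ℕ :=
  Nat.findGreatest
    (fun ℓ => ℓ ≤ min (P.length - i) (Q.length - j) ∧
      ∀ p < ℓ, mtch d (P.getD (i + p) d) (Q.getD (j + p) d))
    (P.length + Q.length)

theorem le_findGreatest_prefix_iff {R : ℕ → Prop} [DecidablePred R] {b N k : ℕ} (hb : b ≤ N) :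
    k ≤ Nat.findGreatest (fun ℓ => ℓ ≤ b ∧ ∀ p < ℓ, R p) N ↔ k ≤ b ∧ ∀ p < k, R p := by
  constructor
  · intro hk
    obtain ⟨hle, hR⟩ := Nat.findGreatest_spec (P := fun ℓ => ℓ ≤ b ∧ ∀ p < ℓ, R p)
      (Nat.zero_le N) ⟨Nat.zero_le b, fun p hp => absurd hp (Nat.not_lt_zero p)⟩
    exact ⟨hk.trans hle, fun p hp => hR p (hp.trans_le hk)⟩
  · rintro ⟨hkb, hR⟩
    exact Nat.le_findGreatest (hkb.trans hb) ⟨hkb, hR⟩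

section

variable [DecidableEq α] {d : α} {k : ℕ}

theorem le_lcew_iff {T : List α} {i j : ℕ} :
    k ≤ lcew d T i j ↔ k ≤ min (T.length - i) (T.length - j) ∧
      ∀ p < k, mtch d (T.getD (i + p) d) (T.getD (j + p) d) :=
  le_findGreatest_prefix_iff (by omega)

theorem le_lcew2_iff {P Q : List α} {i j : ℕ} :
    k ≤ lcew2 d P Q i j ↔ k ≤ min (P.length - i) (Q.length - j) ∧
      ∀ p < k, mtch d (P.getD (i + p) d) (Q.getD (j + p) d) :=
  le_findGreatest_prefix_iff (by omega)

end

theorem List.getD_append_add_length (P Q : List α) (d : α) (j : ℕ) :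
    (P ++ Q).getD (j + P.length) d = Q.getD j d := by
  rw [List.getD_append_right _ _ _ _ (Nat.le_add_left _ _), Nat.add_sub_cancel]

theorem mtch_getD_append_iff {d : α} {P Q : List α} {i j p : ℕ}
    (hip : i + p < P.length) :
    mtch d ((P ++ Q).getD (i + p) d) ((P ++ Q).getD (j + P.length + p) d) ↔
      mtch d (P.getD (i + p) d) (Q.getD (j + p) d) := by
  rw [List.getD_append _ _ _ _ hip, Nat.add_right_comm, List.getD_append_add_length]

theorem stmt18_general [DecidableEq α] (d : α) (P Q : List α) (i j : ℕ) :
    lcew2 d P Q i j =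
      min (lcew d (P ++ Q) i (j + P.length))
        (min (P.length - i) (Q.length - j)) := by
  refine eq_of_forall_le_iff fun k => ?_
  rw [le_min_iff, le_lcew2_iff, le_lcew_iff, List.length_append]
  constructor
  · rintro ⟨hk, hmatch⟩
    exact ⟨⟨by omega, fun p hp => (mtch_getD_append_iff (by omega)).2 (hmatch p hp)⟩, hk⟩
  · rintro ⟨⟨-, hmatch⟩, hk⟩
    exact ⟨hk, fun p hp => (mtch_getD_append_iff (by omega)).1 (hmatch p hp)⟩

theorem stmt18 [DecidableEq α] (d : α) (P Q : List α) (i j : ℕ)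
    (hi : i < P.length) (hj : j < Q.length) :
    lcew2 d P Q i j =
      min (lcew d (P ++ Q) i (j + P.length))
        (min (P.length - i) (Q.length - j)) :=
  stmt18_general d P Q i j
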